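/- Assume V⁺ admits a monomial parametrization with exponent matrix A (data p, A, K, ψ) and that the cone generator matrix E has no zero row. Let c ∈ im₊(Z). Then the following are equivalent: (i) there exist k ∈ K and distinct a, b ∈ ℝ_{>0}^n with (k,a) ∈ V⁺, (k,b) ∈ V⁺ and Za = Zb = c; (ii) there exists k ∈ K such that the equation Z(ψ(k)⋆ξ^A) = c has at least two distinct solutions ξ₁ ≠ ξ₂ ∈ ℝ_{>0}^{n−p}; (iii) there exist a ∈ ℝ_{>0}^n and ξ ∈ ℝ_{>0}^{n−p} with ξ ≠ 𝟙 such that Z(a⋆ξ^A − a) = 0 and Za = c. -/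

import Mathlib

open Matrix

noncomputable section

/-- The monomial map φ: `phi Y x j = ∏ i, x i ^ Y i j`. -/
def phi {n r : ℕ} (Y : Matrix (Fin n) (Fin r) ℕ) (x : Fin n → ℝ) : Fin r → ℝ :=
  fun j => ∏ i, x i ^ Y i j

/-- The positive steady state variety V⁺. -/
def Vplus {n r : ℕ} (Y : Matrix (Fin n) (Fin r) ℕ) (S : Matrix (Fin n) (Fin r) ℝ) :
    Set ((Fin r → ℝ) × (Fin n → ℝ)) :=
  {p | (∀ j, 0 < p.1 j) ∧ (∀ i, 0 < p.2 i) ∧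
    S.mulVec (fun j => p.1 j * phi Y p.2 j) = 0}

/-- `E` is a cone generator matrix for `S`:
`E` is nonnegative and `ker S ∩ ℝ_{≥0}^r = {Eλ : λ ≥ 0}`. -/
def IsConeGenMatrix {n r d : ℕ} (S : Matrix (Fin n) (Fin r) ℝ)
    (E : Matrix (Fin r) (Fin d) ℝ) : Prop :=
  (∀ j l, 0 ≤ E j l) ∧
  {v : Fin r → ℝ | S.mulVec v = 0 ∧ ∀ j, 0 ≤ v j} =
    {v : Fin r → ℝ | ∃ lam : Fin d → ℝ, (∀ l, 0 ≤ lam l) ∧ v = E.mulVec lam}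

/-- The coefficient cone Λ(E). -/
def Lambda {r d : ℕ} (E : Matrix (Fin r) (Fin d) ℝ) : Set (Fin d → ℝ) :=
  {lam | (∀ l, 0 ≤ lam l) ∧ ∀ j, 0 < E.mulVec lam j}

/-- `ξ^B`: for a rational `q × m` matrix `B`, `(ξ^B) j = ∏ i, ξ i ^ (B i j)` (real powers). -/
def vecPow {q m : ℕ} (ξ : Fin q → ℝ) (B : Matrix (Fin q) (Fin m) ℚ) : Fin m → ℝ :=
  fun j => ∏ i, ξ i ^ ((B i j : ℝ))

/-- V⁺ admits a monomial parametrization with exponent matrix `A` (data `p`, `A`, `K`, `ψ`). -/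
def IsMonomialParamExp {n r : ℕ} (Y : Matrix (Fin n) (Fin r) ℕ)
    (S : Matrix (Fin n) (Fin r) ℝ) (p : ℕ) (A : Matrix (Fin (n - p)) (Fin n) ℚ)
    (K : Set (Fin r → ℝ)) (ψ : (Fin r → ℝ) → (Fin n → ℝ)) : Prop :=
  p < n ∧ A.rank = n - p ∧ (∀ k ∈ K, ∀ j, 0 < k j) ∧ (∀ k ∈ K, ∀ i, 0 < ψ k i) ∧
  ∀ k x, (∀ j : Fin r, 0 < k j) → (∀ i : Fin n, 0 < x i) →
    ((k, x) ∈ Vplus Y S ↔ k ∈ K ∧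
      ∃ ξ : Fin (n - p) → ℝ, (∀ l, 0 < ξ l) ∧ x = fun i => ψ k i * vecPow ξ A i)

/-- `Z` is a conservation matrix for `S` (with `s = rank S`):
its rows form a basis of the left kernel of `S`. -/
def IsConservationMatrix {n r : ℕ} (S : Matrix (Fin n) (Fin r) ℝ) (s : ℕ)
    (Z : Matrix (Fin (n - s)) (Fin n) ℝ) : Prop :=
  S.rank = s ∧ s < n ∧ LinearIndependent ℝ (fun i => Z i) ∧
    Submodule.span ℝ (Set.range (fun i => Z i)) = LinearMap.ker S.vecMulLinear

/-- `im₊(Z) = {Zx : x ≥ 0}`. -/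
def imPos {m n : ℕ} (Z : Matrix (Fin m) (Fin n) ℝ) : Set (Fin m → ℝ) :=
  {c | ∃ x : Fin n → ℝ, (∀ i, 0 ≤ x i) ∧ c = Z.mulVec x}

/-- The real row space of a rational matrix. -/
def rowSpace {q m : ℕ} (A : Matrix (Fin q) (Fin m) ℚ) : Submodule ℝ (Fin m → ℝ) :=
  Submodule.span ℝ (Set.range (fun l => fun i => ((A l i : ℝ))))

/-- The column space (image) of `S`. -/
def colSpace {n r : ℕ} (S : Matrix (Fin n) (Fin r) ℝ) : Submodule ℝ (Fin n → ℝ) :=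
  LinearMap.range S.mulVecLin

/-- Componentwise sign of a vector. -/
def signVec {m : ℕ} (v : Fin m → ℝ) : Fin m → ℝ := fun i => Real.sign (v i)

/-! The parametrization `ξ ↦ ψ k ⋆ ξ^A` is injective because `log (ξ^A) = Aᵀ log ξ` and `A` has
full row rank, so (i) and (ii) are the same statement. Writing `a = ψ k ⋆ ξ₁^A` turns a second
solution `ξ₂` into the ratio `ξ = ξ₂ / ξ₁ ≠ 𝟙`, giving (iii). Conversely, since `E` has no zero row,
`E 𝟙` is a positive flux in `ker S`, so every positive `a` is a steady state for the rate constants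
`k = E 𝟙 / φ(a)`; parametrizing `a = ψ k ⋆ ξ₁^A` and taking `ξ₂ = ξ₁ ⋆ ξ` recovers (ii). -/

theorem Matrix.vecMul_map_injective_of_rank_eq {K L : Type*} [Field K] [LinearOrder K]
    [IsStrictOrderedRing K] [Field L] (f : K →+* L) {q m : ℕ} (A : Matrix (Fin q) (Fin m) K)
    (hA : A.rank = q) : Function.Injective fun u : Fin q → L => u ᵥ* A.map f := by
  -- Full row rank survives the extension `f` because it is witnessed by the Gram matrix `A Aᵀ`.
  have hGram : IsUnit (A * Aᵀ) := by
    refine linearIndependent_rows_iff_isUnit.mp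
      (linearIndependent_iff_card_eq_finrank_span.mpr ?_)
    rw [Set.finrank, ← rank_eq_finrank_span_row, rank_self_mul_transpose, hA, Fintype.card_fin]
  have hGramMap : IsUnit (A.map f * (A.map f)ᵀ) := by
    simpa only [RingHom.mapMatrix_apply, Matrix.map_mul, transpose_map] using
      hGram.map f.mapMatrix
  refine Function.Injective.of_comp (f := fun v => v ᵥ* (A.map f)ᵀ) ?_
  simpa only [Function.comp_def, vecMul_vecMul] using vecMul_injective_iff_isUnit.mpr hGramMap

section vecPow

variable {q m : ℕ}

lemma vecPow_pos {ξ : Fin q → ℝ} (hξ : ∀ l, 0 < ξ l) (B : Matrix (Fin q) (Fin m) ℚ) (j : Fin m) :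
    0 < vecPow ξ B j :=
  Finset.prod_pos fun i _ => Real.rpow_pos_of_pos (hξ i) _

lemma vecPow_mul {ξ η : Fin q → ℝ} (hξ : ∀ l, 0 ≤ ξ l) (hη : ∀ l, 0 ≤ η l)
    (B : Matrix (Fin q) (Fin m) ℚ) : vecPow (ξ * η) B = vecPow ξ B * vecPow η B := by
  funext j
  simp only [vecPow, Pi.mul_apply, ← Finset.prod_mul_distrib, Real.mul_rpow (hξ _) (hη _)]

lemma log_vecPow {ξ : Fin q → ℝ} (hξ : ∀ l, 0 < ξ l) (B : Matrix (Fin q) (Fin m) ℚ) :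
    (fun j => Real.log (vecPow ξ B j)) = (fun i => Real.log (ξ i)) ᵥ* B.map (↑) := by
  funext j
  rw [vecPow, Real.log_prod fun i _ => (Real.rpow_pos_of_pos (hξ i) _).ne']
  simp only [vecMul, dotProduct, map_apply, Real.log_rpow (hξ _), mul_comm]

lemma vecPow_mul_vecPow_div {ξ₁ ξ₂ : Fin q → ℝ} (hξ₁ : ∀ l, 0 < ξ₁ l) (hξ₂ : ∀ l, 0 < ξ₂ l)
    (B : Matrix (Fin q) (Fin m) ℚ) : vecPow ξ₁ B * vecPow (ξ₂ / ξ₁) B = vecPow ξ₂ B := by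
  rw [← vecPow_mul (η := ξ₂ / ξ₁) (fun l => (hξ₁ l).le) (fun l => (div_pos (hξ₂ l) (hξ₁ l)).le)]
  exact congrArg (vecPow · B) (funext fun l => mul_div_cancel₀ _ (hξ₁ l).ne')

lemma vecPow_injOn_of_rank_eq {B : Matrix (Fin q) (Fin m) ℚ} (hB : B.rank = q) :
    Set.InjOn (vecPow · B) {ξ | ∀ l, 0 < ξ l} := by
  intro ξ₁ hξ₁ ξ₂ hξ₂ h
  have hlog : (fun i => Real.log (ξ₁ i)) = fun i => Real.log (ξ₂ i) := by
    refine vecMul_map_injective_of_rank_eq (Rat.castHom ℝ) B hB ?_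
    change _ ᵥ* B.map (Rat.cast : ℚ → ℝ) = _ ᵥ* B.map (Rat.cast : ℚ → ℝ)
    rw [← log_vecPow hξ₁, ← log_vecPow hξ₂]
    exact congrArg (fun v j => Real.log (v j)) h
  funext i
  exact Real.log_injOn_pos (hξ₁ i) (hξ₂ i) (congrFun hlog i)

end vecPow

lemma phi_pos {n r : ℕ} (Y : Matrix (Fin n) (Fin r) ℕ) {x : Fin n → ℝ} (hx : ∀ i, 0 < x i)
    (j : Fin r) : 0 < phi Y x j :=
  Finset.prod_pos fun i _ => pow_pos (hx i) _

lemma Matrix.mulVec_sub_eq_zero_iff {m n : ℕ} (Z : Matrix (Fin m) (Fin n) ℝ) (x y : Fin n → ℝ) :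
    Z *ᵥ (fun i => x i - y i) = 0 ↔ Z *ᵥ x = Z *ᵥ y := by
  rw [← sub_eq_zero (a := Z *ᵥ x), ← mulVec_sub]
  rfl

namespace IsConeGenMatrix

variable {n r d : ℕ} {S : Matrix (Fin n) (Fin r) ℝ} {E : Matrix (Fin r) (Fin d) ℝ}

lemma exists_pos_mulVec_eq_zero (hE : IsConeGenMatrix S E) (hrow : ∀ j, ∃ l, E j l ≠ 0) :
    ∃ v : Fin r → ℝ, (∀ j, 0 < v j) ∧ S *ᵥ v = 0 := by
  have hker : E *ᵥ (fun _ => 1) ∈ {v : Fin r → ℝ | S *ᵥ v = 0 ∧ ∀ j, 0 ≤ v j} :=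
    hE.2 ▸ ⟨fun _ => 1, fun _ => zero_le_one, rfl⟩
  refine ⟨E *ᵥ (fun _ => 1), fun j => ?_, hker.1⟩
  obtain ⟨l, hl⟩ := hrow j
  simpa only [mulVec, dotProduct, mul_one] using
    Finset.sum_pos' (fun l _ => hE.1 j l) ⟨l, Finset.mem_univ l, (hE.1 j l).lt_of_ne' hl⟩

lemma exists_mem_Vplus (hE : IsConeGenMatrix S E) (hrow : ∀ j, ∃ l, E j l ≠ 0)
    (Y : Matrix (Fin n) (Fin r) ℕ) {x : Fin n → ℝ} (hx : ∀ i, 0 < x i) :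
    ∃ k, (k, x) ∈ Vplus Y S := by
  obtain ⟨v, hv, hSv⟩ := hE.exists_pos_mulVec_eq_zero hrow
  refine ⟨fun j => v j / phi Y x j, fun j => div_pos (hv j) (phi_pos Y hx j), hx, ?_⟩
  simpa only [div_mul_cancel₀ _ (phi_pos Y hx _).ne'] using hSv

end IsConeGenMatrix

namespace IsMonomialParamExp

variable {n r p : ℕ} {Y : Matrix (Fin n) (Fin r) ℕ} {S : Matrix (Fin n) (Fin r) ℝ}
  {A : Matrix (Fin (n - p)) (Fin n) ℚ} {K : Set (Fin r → ℝ)} {ψ : (Fin r → ℝ) → (Fin n → ℝ)}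
  {k : Fin r → ℝ}

lemma param_pos (h : IsMonomialParamExp Y S p A K ψ) (hk : k ∈ K) {ξ : Fin (n - p) → ℝ}
    (hξ : ∀ l, 0 < ξ l) (i : Fin n) : 0 < ψ k i * vecPow ξ A i :=
  mul_pos (h.2.2.2.1 k hk i) (vecPow_pos hξ A i)

lemma param_mem_Vplus (h : IsMonomialParamExp Y S p A K ψ) (hk : k ∈ K) {ξ : Fin (n - p) → ℝ}
    (hξ : ∀ l, 0 < ξ l) : (k, fun i => ψ k i * vecPow ξ A i) ∈ Vplus Y S :=
  (h.2.2.2.2 k _ (h.2.2.1 k hk) (h.param_pos hk hξ)).mpr ⟨hk, ξ, hξ, rfl⟩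

lemma exists_param_of_mem_Vplus (h : IsMonomialParamExp Y S p A K ψ) {x : Fin n → ℝ}
    (hx : (k, x) ∈ Vplus Y S) :
    k ∈ K ∧ ∃ ξ : Fin (n - p) → ℝ, (∀ l, 0 < ξ l) ∧ x = fun i => ψ k i * vecPow ξ A i :=
  (h.2.2.2.2 k x hx.1 hx.2.1).mp hx

lemma param_injOn (h : IsMonomialParamExp Y S p A K ψ) (hk : k ∈ K) :
    Set.InjOn (fun ξ i => ψ k i * vecPow ξ A i) {ξ | ∀ l, 0 < ξ l} :=
  fun _ hξ₁ _ hξ₂ heq => vecPow_injOn_of_rank_eq h.2.1 hξ₁ hξ₂ <| funext fun i =>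
    mul_left_cancel₀ (h.2.2.2.1 k hk i).ne' (congrFun heq i)

end IsMonomialParamExp

theorem multistationarity_in_c_space_general {n r d s p : ℕ}
    (Y : Matrix (Fin n) (Fin r) ℕ) (S : Matrix (Fin n) (Fin r) ℝ)
    (A : Matrix (Fin (n - p)) (Fin n) ℚ) (K : Set (Fin r → ℝ))
    (ψ : (Fin r → ℝ) → (Fin n → ℝ)) (hparam : IsMonomialParamExp Y S p A K ψ)
    (E : Matrix (Fin r) (Fin d) ℝ) (hE : IsConeGenMatrix S E)
    (hrow : ∀ j, ∃ l, E j l ≠ 0)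
    (Z : Matrix (Fin (n - s)) (Fin n) ℝ)
    (c : Fin (n - s) → ℝ) :
    ((∃ k ∈ K, ∃ a b : Fin n → ℝ, a ≠ b ∧
        (k, a) ∈ Vplus Y S ∧ (k, b) ∈ Vplus Y S ∧
        Z.mulVec a = c ∧ Z.mulVec b = c) ↔
      (∃ k ∈ K, ∃ ξ₁ ξ₂ : Fin (n - p) → ℝ, (∀ l, 0 < ξ₁ l) ∧ (∀ l, 0 < ξ₂ l) ∧
        ξ₁ ≠ ξ₂ ∧ Z.mulVec (fun i => ψ k i * vecPow ξ₁ A i) = c ∧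
        Z.mulVec (fun i => ψ k i * vecPow ξ₂ A i) = c)) ∧
    ((∃ k ∈ K, ∃ ξ₁ ξ₂ : Fin (n - p) → ℝ, (∀ l, 0 < ξ₁ l) ∧ (∀ l, 0 < ξ₂ l) ∧
        ξ₁ ≠ ξ₂ ∧ Z.mulVec (fun i => ψ k i * vecPow ξ₁ A i) = c ∧
        Z.mulVec (fun i => ψ k i * vecPow ξ₂ A i) = c) ↔
      (∃ a : Fin n → ℝ, (∀ i, 0 < a i) ∧ ∃ ξ : Fin (n - p) → ℝ, (∀ l, 0 < ξ l) ∧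
        ξ ≠ (fun _ => 1) ∧ Z.mulVec (fun i => a i * vecPow ξ A i - a i) = 0 ∧
        Z.mulVec a = c)) := by
  refine ⟨⟨?_, ?_⟩, ⟨?_, ?_⟩⟩
  · rintro ⟨k, hk, a, b, hab, haV, hbV, hZa, hZb⟩
    obtain ⟨-, ξ₁, hξ₁, rfl⟩ := hparam.exists_param_of_mem_Vplus haV
    obtain ⟨-, ξ₂, hξ₂, rfl⟩ := hparam.exists_param_of_mem_Vplus hbV
    exact ⟨k, hk, ξ₁, ξ₂, hξ₁, hξ₂, fun h => hab (h ▸ rfl), hZa, hZb⟩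
  · rintro ⟨k, hk, ξ₁, ξ₂, hξ₁, hξ₂, hne, hZ₁, hZ₂⟩
    exact ⟨k, hk, _, _, fun h => hne (hparam.param_injOn hk hξ₁ hξ₂ h),
      hparam.param_mem_Vplus hk hξ₁, hparam.param_mem_Vplus hk hξ₂, hZ₁, hZ₂⟩
  · rintro ⟨k, hk, ξ₁, ξ₂, hξ₁, hξ₂, hne, hZ₁, hZ₂⟩
    refine ⟨_, hparam.param_pos hk hξ₁, ξ₂ / ξ₁, fun l => div_pos (hξ₂ l) (hξ₁ l),
      fun h => hne ?_, ?_, hZ₁⟩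
    · funext l
      exact ((div_eq_one_iff_eq (hξ₁ l).ne').mp (congrFun h l)).symm
    · rw [mulVec_sub_eq_zero_iff, hZ₁, ← hZ₂]
      congr 1
      funext i
      rw [mul_assoc, ← Pi.mul_apply (vecPow ξ₁ A), vecPow_mul_vecPow_div hξ₁ hξ₂]
  · rintro ⟨a, ha, ξ, hξ, hξne, hZξ, hZa⟩
    obtain ⟨k, hka⟩ := hE.exists_mem_Vplus hrow Y ha
    obtain ⟨hk, ξ₁, hξ₁, rfl⟩ := hparam.exists_param_of_mem_Vplus hka
    refine ⟨k, hk, ξ₁, ξ₁ * ξ, hξ₁, fun l => mul_pos (hξ₁ l) (hξ l), fun h => hξne ?_, hZa, ?_⟩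
    · funext l
      exact (mul_eq_left₀ (hξ₁ l).ne').mp (congrFun h l).symm
    · rw [mulVec_sub_eq_zero_iff] at hZξ
      simpa only [vecPow_mul (fun l => (hξ₁ l).le) (fun l => (hξ l).le), Pi.mul_apply, mul_assoc,
        hZa] using hZξ

/-- multistationarity at a fixed total concentration c, three equivalent
formulations. -/
theorem multistationarity_in_c_space {n r d s p : ℕ} (hn : 1 ≤ n) (hr : 1 ≤ r)
    (Y : Matrix (Fin n) (Fin r) ℕ) (S : Matrix (Fin n) (Fin r) ℝ)
    (A : Matrix (Fin (n - p)) (Fin n) ℚ) (K : Set (Fin r → ℝ))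
    (ψ : (Fin r → ℝ) → (Fin n → ℝ)) (hparam : IsMonomialParamExp Y S p A K ψ)
    (E : Matrix (Fin r) (Fin d) ℝ) (hE : IsConeGenMatrix S E)
    (hrow : ∀ j, ∃ l, E j l ≠ 0)
    (Z : Matrix (Fin (n - s)) (Fin n) ℝ) (hZ : IsConservationMatrix S s Z)
    (c : Fin (n - s) → ℝ) (hc : c ∈ imPos Z) :
    ((∃ k ∈ K, ∃ a b : Fin n → ℝ, a ≠ b ∧
        (k, a) ∈ Vplus Y S ∧ (k, b) ∈ Vplus Y S ∧
        Z.mulVec a = c ∧ Z.mulVec b = c) ↔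
      (∃ k ∈ K, ∃ ξ₁ ξ₂ : Fin (n - p) → ℝ, (∀ l, 0 < ξ₁ l) ∧ (∀ l, 0 < ξ₂ l) ∧
        ξ₁ ≠ ξ₂ ∧ Z.mulVec (fun i => ψ k i * vecPow ξ₁ A i) = c ∧
        Z.mulVec (fun i => ψ k i * vecPow ξ₂ A i) = c)) ∧
    ((∃ k ∈ K, ∃ ξ₁ ξ₂ : Fin (n - p) → ℝ, (∀ l, 0 < ξ₁ l) ∧ (∀ l, 0 < ξ₂ l) ∧
        ξ₁ ≠ ξ₂ ∧ Z.mulVec (fun i => ψ k i * vecPow ξ₁ A i) = c ∧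
        Z.mulVec (fun i => ψ k i * vecPow ξ₂ A i) = c) ↔
      (∃ a : Fin n → ℝ, (∀ i, 0 < a i) ∧ ∃ ξ : Fin (n - p) → ℝ, (∀ l, 0 < ξ l) ∧
        ξ ≠ (fun _ => 1) ∧ Z.mulVec (fun i => a i * vecPow ξ A i - a i) = 0 ∧
        Z.mulVec a = c)) :=
  multistationarity_in_c_space_general Y S A K ψ hparam E hE hrow Z c
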